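/- Linear stability of the scalar ImEx scheme: consider the scalar recursion (c_L)(yⁿ⁺¹ − yⁿ)/τ + (c_N)(yⁿ − yⁿ⁻¹)/τ + a_L yⁿ⁺¹ + a_N yⁿ = 0 with c_L > 0, a_L > 0, τ > 0, and suppose |c_N| ≤ (1−ρ)c_L and |a_N| ≤ (1−ρ)a_L for some ρ ∈ (0,1) with c_N ≥ 0 and a_N ≥ 0. Then both roots of the characteristic polynomial (c_L + τ a_L)·z² + (c_N − c_L + τ a_N)·z − c_N = 0 have modulus at most 1. -/

import Mathlib

/-- Linear stability of the scalar ImEx scheme: under the dominance conditions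
`0 ≤ c_N ≤ (1-ρ)c_L` and `0 ≤ a_N ≤ (1-ρ)a_L` with `c_L, a_L, τ > 0` and
`ρ ∈ (0,1)`, every root of the characteristic polynomial
`(c_L + τ a_L) z² + (c_N - c_L + τ a_N) z - c_N = 0` has modulus at most `1`. -/
theorem scalar_imex_root_condition
    (cL aL cN aN τ ρ : ℝ)
    (hcL : 0 < cL) (haL : 0 < aL) (hτ : 0 < τ)
    (hρ0 : 0 < ρ) (hρ1 : ρ < 1)
    (hcN0 : 0 ≤ cN) (haN0 : 0 ≤ aN)
    (hcN : cN ≤ (1 - ρ) * cL) (haN : aN ≤ (1 - ρ) * aL) :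
    ∀ z : ℂ,
      ((cL : ℂ) + (τ : ℂ) * (aL : ℂ)) * z ^ 2
          + ((cN : ℂ) - (cL : ℂ) + (τ : ℂ) * (aN : ℂ)) * z - (cN : ℂ) = 0 →
        ‖z‖ ≤ 1 := by
  intro z hz
  by_contra h
  push_neg at h
  set r : ℝ := ‖z‖ with hr
  have hr1 : 1 < r := h
  have hrpos : 0 < r := lt_trans one_pos hr1
  have hApos : 0 < cL + τ * aL := by positivity
  have hBC : |cN - cL + τ * aN| + cN ≤ cL + τ * aL := by
    rcases abs_cases (cN - cL + τ * aN) with ⟨he, _⟩ | ⟨he, _⟩ <;> rw [he] <;> nlinarith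
  have heq : ((cL : ℂ) + (τ : ℂ) * (aL : ℂ)) * z ^ 2
      = -(((cN : ℂ) - (cL : ℂ) + (τ : ℂ) * (aN : ℂ)) * z - (cN : ℂ)) := by
    linear_combination hz
  have habs : (cL + τ * aL) * r ^ 2
      = ‖((cN : ℂ) - (cL : ℂ) + (τ : ℂ) * (aN : ℂ)) * z - (cN : ℂ)‖ := by
    have := congrArg (‖·‖) heq
    rw [norm_neg] at this
    rw [← this, norm_mul, norm_pow]
    have : ‖((cL : ℂ) + (τ : ℂ) * (aL : ℂ))‖ = cL + τ * aL := by
      rw [show ((cL : ℂ) + (τ : ℂ) * (aL : ℂ)) = ((cL + τ * aL : ℝ) : ℂ) by push_cast; ring,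
        Complex.norm_real, Real.norm_eq_abs, abs_of_pos hApos]
    rw [this, hr]
  have hle : (cL + τ * aL) * r ^ 2 ≤ (|cN - cL + τ * aN| + cN) * r := by
    rw [habs]
    calc ‖((cN : ℂ) - (cL : ℂ) + (τ : ℂ) * (aN : ℂ)) * z - (cN : ℂ)‖
        ≤ ‖((cN : ℂ) - (cL : ℂ) + (τ : ℂ) * (aN : ℂ)) * z‖
            + ‖((cN : ℂ))‖ := norm_sub_le _ _
      _ = |cN - cL + τ * aN| * r + cN := by
          rw [norm_mul, Complex.norm_real, Real.norm_eq_abs, abs_of_nonneg hcN0,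
            show ((cN : ℂ) - (cL : ℂ) + (τ : ℂ) * (aN : ℂ)) = ((cN - cL + τ * aN : ℝ) : ℂ)
              by push_cast; ring, Complex.norm_real, Real.norm_eq_abs, hr]
      _ ≤ (|cN - cL + τ * aN| + cN) * r := by nlinarith [abs_nonneg (cN - cL + τ * aN)]
  nlinarith [mul_le_mul_of_nonneg_right hBC hrpos.le, mul_pos hApos hrpos]
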